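/- arXiv:2108.12733 — 3 statements merged into one kernel-verified Lean document; each statement's English description precedes it below -/
import Mathlib

section
/- Let p be a prime with p ≥ 5 and let q_a = (a^{p−1} − 1)/p denote the Fermat quotient of p in base a. Then q_{(p+1)/2} + q_2 ≡ −1 − 4^{−1}·Σ_{k=1}^{(p−1)/2} 1/k² (mod p), where 4^{−1} is the inverse of 4 modulo p (equivalently the rational 1/4). -/
/-- `x ≡ y (mod p^r)` for rationals: `x - y = p^r * t` with the denominator of `t`
prime to `p`, i.e. the `p`-adic valuation of `x - y` is at least `r`. -/
def ratCongr (p r : ℕ) (x y : ℚ) : Prop :=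
  ∃ t : ℚ, x - y = (p : ℚ) ^ r * t ∧ ¬ (p ∣ t.den)

lemma ratCongr_of_int (p : ℕ) (hp : p.Prime) (x y : ℚ) (c n : ℤ)
    (hc : ¬ (p:ℤ) ∣ c) (hn : (p:ℤ) ∣ n) (h : (c:ℚ) * (x - y) = n) :
    ratCongr p 1 x y := by
  have hc0 : (c:ℚ) ≠ 0 := by
    intro h0
    exact hc (by rw [show c = 0 by exact_mod_cast h0]; exact dvd_zero _)
  have hp0 : (p:ℚ) ≠ 0 := by exact_mod_cast hp.ne_zero
  refine ⟨((n / p : ℤ) : ℚ) / (c : ℚ), ?_, ?_⟩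
  · have h2 : x - y = (n:ℚ)/c := by rw [eq_div_iff hc0]; linarith [h]
    rw [pow_one, Int.cast_div_charZero hn, h2]
    field_simp
    simp [hp0]
  · intro hdvd
    have hden : (((((n / p : ℤ) : ℚ)) / (c : ℚ)).den : ℤ) ∣ c := by
      rw [show ((n / p : ℤ) : ℚ) / (c : ℚ) = Rat.divInt (n/p) c from (Rat.divInt_eq_div _ _).symm]
      exact Rat.den_dvd _ _
    exact hc ((Int.natCast_dvd_natCast.mpr hdvd).trans hden)

lemma binom_sq_dvd (x : ℤ) (n : ℕ) : x^2 ∣ (1+x)^n - (1+n*x) := by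
  induction n with
  | zero => simp
  | succ n ih =>
    obtain ⟨t, ht⟩ := ih
    refine ⟨(1+x)*t + n, ?_⟩
    push_cast
    linear_combination (1 + x) * ht

lemma sum_range_zmod (p : ℕ) [NeZero p] (g : ZMod p → ZMod p) :
    ∑ k ∈ Finset.range p, g (k : ZMod p) = ∑ x : ZMod p, g x := by
  refine Finset.sum_nbij' (fun k => ((k:ℕ):ZMod p)) (fun x => x.val) ?_ ?_ ?_ ?_ ?_ <;>
    intro a ha
  · exact Finset.mem_univ _
  · exact Finset.mem_range.mpr (ZMod.val_lt a)
  · exact ZMod.val_cast_of_lt (Finset.mem_range.mp ha)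
  · exact ZMod.natCast_rightInverse a
  · rfl

lemma sum_inv_sq_full (p : ℕ) (hp : p.Prime) (hp5 : 5 ≤ p) :
    ∑ k ∈ Finset.Ioc 0 (p-1), (((k:ℕ):ZMod p)⁻¹)^2 = 0 := by
  haveI : Fact p.Prime := ⟨hp⟩
  have h0 : ∑ k ∈ Finset.range p, (((k:ℕ):ZMod p)⁻¹)^2
      = ∑ k ∈ Finset.Ioc 0 (p-1), (((k:ℕ):ZMod p)⁻¹)^2 := by
    have : Finset.range p = insert 0 (Finset.Ioc 0 (p-1)) := by
      ext k; simp [Finset.mem_Ioc, Finset.mem_range]; omega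
    rw [this, Finset.sum_insert (by simp)]
    simp
  rw [← h0, sum_range_zmod p (fun x => (x⁻¹)^2)]
  have hinv : ∑ x : ZMod p, (x⁻¹)^2 = ∑ x : ZMod p, x^2 :=
    Fintype.sum_equiv (Function.Involutive.toPerm _ inv_involutive) _ _ (fun x => by simp)
  rw [hinv]
  exact FiniteField.sum_pow_lt_card_sub_one (K := ZMod p) 2 (by rw [ZMod.card]; omega)

lemma sum_inv_sq_half (p : ℕ) (hp : p.Prime) (hp5 : 5 ≤ p) :
    ∑ k ∈ Finset.Ioc 0 ((p-1)/2), (((k:ℕ):ZMod p)⁻¹)^2 = 0 := by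
  haveI : Fact p.Prime := ⟨hp⟩
  have hodd : p % 2 = 1 := Nat.odd_iff.mp (hp.odd_of_ne_two (by omega))
  set m := (p-1)/2 with hm
  have hmm : m + m = p - 1 := by omega
  have hsplit : ∑ k ∈ Finset.Ioc 0 m, (((k:ℕ):ZMod p)⁻¹)^2
      + ∑ k ∈ Finset.Ioc m (p-1), (((k:ℕ):ZMod p)⁻¹)^2
      = ∑ k ∈ Finset.Ioc 0 (p-1), (((k:ℕ):ZMod p)⁻¹)^2 :=
    Finset.sum_Ioc_consecutive _ (by omega) (by omega)
  have hrefl : ∑ k ∈ Finset.Ioc m (p-1), (((k:ℕ):ZMod p)⁻¹)^2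
      = ∑ k ∈ Finset.Ioc 0 m, (((k:ℕ):ZMod p)⁻¹)^2 := by
    refine Finset.sum_nbij' (fun k => p - k) (fun k => p - k) ?_ ?_ ?_ ?_ ?_
    · intro a ha; simp only [Finset.mem_Ioc] at *; omega
    · intro a ha; simp only [Finset.mem_Ioc] at *; omega
    · intro a ha; simp only [Finset.mem_Ioc] at ha; show p - (p - a) = a; omega
    · intro a ha; simp only [Finset.mem_Ioc] at ha; show p - (p - a) = a; omega
    · intro a ha
      simp only [Finset.mem_Ioc] at ha
      have hcast : ((p - a : ℕ) : ZMod p) = -(a : ZMod p) := by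
        have h1 : ((p - a : ℕ) : ZMod p) = ((p:ℕ):ZMod p) - (a:ZMod p) := by
          push_cast [Nat.cast_sub (by omega : a ≤ p)]; ring
        rw [h1, ZMod.natCast_self]; ring
      rw [hcast, inv_neg, neg_sq]
  have h2 : (2 : ZMod p) * ∑ k ∈ Finset.Ioc 0 m, (((k:ℕ):ZMod p)⁻¹)^2 = 0 := by
    have h := hsplit.trans (sum_inv_sq_full p hp hp5)
    rw [hrefl] at h
    rw [two_mul]; exact h
  have h2ne : (2 : ZMod p) ≠ 0 := by
    have h4 : ((2:ℕ) : ZMod p) ≠ 0 := by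
      rw [Ne, ZMod.natCast_eq_zero_iff]
      intro h; exact absurd (Nat.le_of_dvd (by norm_num) h) (by omega)
    simpa using h4
  exact (mul_eq_zero.mp h2).resolve_left h2ne

lemma key_int_dvd (p : ℕ) (hp : p.Prime) (hp5 : 5 ≤ p)
    (hFa : (p:ℤ) ∣ (((p+1)/2 : ℕ) : ℤ)^(p-1) - 1)
    (hF2 : (p:ℤ) ∣ (2:ℤ)^(p-1) - 1) :
    (p:ℤ) ∣ ((((p+1)/2 : ℕ):ℤ)^(p-1) - 1)/p + ((2:ℤ)^(p-1) - 1)/p + 1 := by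
  have hodd : p % 2 = 1 := Nat.odd_iff.mp (hp.odd_of_ne_two (by omega))
  set a : ℤ := (((p+1)/2 : ℕ) : ℤ)
  set A : ℤ := a^(p-1)
  set B : ℤ := (2:ℤ)^(p-1)
  have hp0 : (p:ℤ) ≠ 0 := by exact_mod_cast hp.ne_zero
  rw [← mul_dvd_mul_iff_left hp0, mul_add, mul_add,
    Int.mul_ediv_cancel' hFa, Int.mul_ediv_cancel' hF2, mul_one]
  have hAB : A * B = (1 + (p:ℤ))^(p-1) := by
    rw [← mul_pow]
    congr 1
    have h : (2 * ((p+1)/2) : ℕ) = p + 1 := by omega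
    have h' : (2:ℤ) * a = (p:ℤ) + 1 := by
      show (2:ℤ) * (((p+1)/2 : ℕ):ℤ) = (p:ℤ) + 1
      exact_mod_cast h
    linarith
  have h1 : (p:ℤ)*(p:ℤ) ∣ (1+(p:ℤ))^(p-1) - (1 + ((p-1:ℕ):ℤ)*p) := by
    have := binom_sq_dvd (p:ℤ) (p-1)
    rwa [sq] at this
  have h2 : (p:ℤ)*(p:ℤ) ∣ (A-1)*(B-1) := mul_dvd_mul hFa hF2
  have hcast : ((p-1:ℕ):ℤ) = (p:ℤ) - 1 := by
    push_cast [Nat.cast_sub (by omega : 1 ≤ p)]; ring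
  rw [hcast] at h1
  have key : (A - 1) + (B - 1) + (p:ℤ)
      = ((1+(p:ℤ))^(p-1) - (1 + ((p:ℤ)-1)*p)) - (A-1)*(B-1) + (p:ℤ)*(p:ℤ) := by
    rw [← hAB]; ring
  rw [key]
  exact dvd_add (dvd_sub h1 h2) dvd_rfl

/-- `q_{(p+1)/2} + q_2 ≡ -1 - (1/4)·Σ_{k=1}^{(p-1)/2} 1/k² (mod p)`,
where `q_a = (a^(p-1) - 1)/p` is the Fermat quotient in base `a`. -/
theorem fermat_quotient_half_plus_two (p : ℕ) (hp : p.Prime) (hp5 : 5 ≤ p) :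
    ratCongr p 1
      (((((((p + 1) / 2 : ℕ) : ℤ) ^ (p - 1) - 1) / (p : ℤ) : ℤ) : ℚ)
        + ((((2 : ℤ) ^ (p - 1) - 1) / (p : ℤ) : ℤ) : ℚ))
      (-1 - (1 / 4) * ∑ k ∈ Finset.Icc 1 ((p - 1) / 2), (1 : ℚ) / (k : ℚ) ^ 2) := by
  haveI : Fact p.Prime := ⟨hp⟩
  have hodd : p % 2 = 1 := Nat.odd_iff.mp (hp.odd_of_ne_two (by omega))
  set m : ℕ := (p-1)/2 with hm
  -- basic nonzero facts in ZMod p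
  have h2ne : (2 : ZMod p) ≠ 0 := by
    have h4 : ((2:ℕ) : ZMod p) ≠ 0 := by
      rw [Ne, ZMod.natCast_eq_zero_iff]
      intro h; exact absurd (Nat.le_of_dvd (by norm_num) h) (by omega)
    simpa using h4
  have ha0 : (((p+1)/2 : ℕ) : ZMod p) ≠ 0 := by
    have h1 : ((2 * ((p+1)/2) : ℕ) : ZMod p) = ((p+1 : ℕ) : ZMod p) := by
      congr 1; omega
    rw [Nat.cast_mul, Nat.cast_add, ZMod.natCast_self, zero_add, Nat.cast_one] at h1
    intro h
    rw [h, mul_zero] at h1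
    exact one_ne_zero h1.symm
  -- Fermat's little theorem facts
  have hFa : (p:ℤ) ∣ (((p+1)/2 : ℕ) : ℤ)^(p-1) - 1 := by
    rw [← ZMod.intCast_zmod_eq_zero_iff_dvd, Int.cast_sub, Int.cast_pow, Int.cast_natCast,
      Int.cast_one, ZMod.pow_card_sub_one_eq_one ha0, sub_self]
  have hF2 : (p:ℤ) ∣ (2:ℤ)^(p-1) - 1 := by
    rw [← ZMod.intCast_zmod_eq_zero_iff_dvd, Int.cast_sub, Int.cast_pow, Int.cast_two,
      Int.cast_one, ZMod.pow_card_sub_one_eq_one h2ne, sub_self]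
  -- the clearing factor and numerator
  set W : ℤ := ∏ k ∈ Finset.Icc 1 m, (k:ℤ) with hW
  have hkdvdW : ∀ k ∈ Finset.Icc 1 m, (k:ℤ) ∣ W :=
    fun k hk => Finset.dvd_prod_of_mem _ hk
  have hkneq : ∀ k ∈ Finset.Icc 1 m, ((k:ℕ) : ZMod p) ≠ 0 := by
    intro k hk
    simp only [Finset.mem_Icc] at hk
    rw [Ne, ZMod.natCast_eq_zero_iff]
    intro h
    exact absurd (Nat.le_of_dvd (by omega) h) (by omega)
  have hWne : ((W : ℤ) : ZMod p) ≠ 0 := by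
    rw [hW]
    push_cast
    rw [Finset.prod_ne_zero_iff]
    exact hkneq
  set qa : ℤ := ((((p+1)/2 : ℕ) : ℤ)^(p-1) - 1)/(p:ℤ) with hqa
  set q2 : ℤ := ((2:ℤ)^(p-1) - 1)/(p:ℤ) with hq2
  set n : ℤ := 4*W^2*(qa + q2 + 1) + ∑ k ∈ Finset.Icc 1 m, (W / (k:ℤ))^2 with hn
  have hIoc : Finset.Icc 1 m = Finset.Ioc 0 m := by
    ext k; simp [Finset.mem_Icc, Finset.mem_Ioc]; omega
  -- the p-divisibility of n
  have hndvd : (p:ℤ) ∣ n := by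
    rw [← ZMod.intCast_zmod_eq_zero_iff_dvd]
    have hkey : ((qa + q2 + 1 : ℤ) : ZMod p) = 0 :=
      (ZMod.intCast_zmod_eq_zero_iff_dvd _ p).mpr (key_int_dvd p hp hp5 hFa hF2)
    have hsplit : ((n : ℤ) : ZMod p)
        = ((4*W^2 : ℤ) : ZMod p) * ((qa + q2 + 1 : ℤ) : ZMod p)
          + ∑ k ∈ Finset.Icc 1 m, (((W / (k:ℤ) : ℤ)) : ZMod p)^2 := by
      rw [hn]; push_cast; ring
    rw [hsplit, hkey, mul_zero, zero_add]
    have hterm : ∀ k ∈ Finset.Icc 1 m,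
        (((W / (k:ℤ) : ℤ)) : ZMod p)^2 = ((W:ℤ) : ZMod p)^2 * (((k:ℕ):ZMod p)⁻¹)^2 := by
      intro k hk
      have hdvd := hkdvdW k hk
      have hmul : (W / (k:ℤ)) * (k:ℤ) = W := Int.ediv_mul_cancel hdvd
      have hmul' : (((W / (k:ℤ) : ℤ)) : ZMod p) * ((k:ℕ) : ZMod p) = ((W:ℤ) : ZMod p) := by
        have := congrArg (fun z : ℤ => ((z : ℤ) : ZMod p)) hmul
        push_cast at this
        exact_mod_cast this
      have hkne := hkneq k hk
      have : (((W / (k:ℤ) : ℤ)) : ZMod p) = ((W:ℤ) : ZMod p) * (((k:ℕ):ZMod p))⁻¹ := by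
        field_simp
        exact hmul'
      rw [this, mul_pow]
    rw [Finset.sum_congr rfl hterm, ← Finset.mul_sum, hIoc, sum_inv_sq_half p hp hp5, mul_zero]
  -- the clearing factor is prime to p
  have hcne : ¬ (p:ℤ) ∣ 4*W^2 := by
    intro h
    rw [← ZMod.intCast_zmod_eq_zero_iff_dvd] at h
    push_cast at h
    rcases mul_eq_zero.mp h with h4 | hw
    · have : ((4:ℕ) : ZMod p) = 0 := by exact_mod_cast h4
      rw [ZMod.natCast_eq_zero_iff] at this
      exact absurd (Nat.le_of_dvd (by norm_num) this) (by omega)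
    · exact hWne (pow_eq_zero_iff (two_ne_zero) |>.mp hw)
  -- main cast identity
  apply ratCongr_of_int p hp _ _ (4*W^2) n hcne hndvd
  have esum : ∀ k ∈ Finset.Icc 1 m,
      (((W / (k:ℤ) : ℤ)) : ℚ)^2 = ((W:ℤ):ℚ)^2 * ((1:ℚ)/(k:ℚ)^2) := by
    intro k hk
    simp only [Finset.mem_Icc] at hk
    have hk0 : ((k:ℕ) : ℚ) ≠ 0 := by
      simp only [ne_eq, Nat.cast_eq_zero]; omega
    rw [Int.cast_div_charZero (hkdvdW k (Finset.mem_Icc.mpr hk))]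
    push_cast
    field_simp
  rw [hn]
  push_cast
  rw [Finset.sum_congr rfl esum, ← Finset.mul_sum]
  ring
end

section
/- Let p be an odd prime. Then the sum of the first p−2 divided Bernoulli numbers satisfies Σ_{i=1}^{p−2} B_i/i ≡ w_p (mod p), where w_p = ((p−1)! + 1)/p is the Wilson quotient. -/
section Aux

private lemma prod_one_add_sq_zero {R : Type*} [CommRing R] {c : R} (hc : c * c = 0)
    {ι : Type*} (s : Finset ι) (f : ι → R) :
    ∏ i ∈ s, (1 + c * f i) = 1 + c * ∑ i ∈ s, f i := by
  classical
  induction s using Finset.induction_on with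
  | empty => simp
  | insert _ _ h ih =>
    rename_i a s
    rw [Finset.prod_insert h, Finset.sum_insert h, ih]
    linear_combination (f a * ∑ i ∈ s, f i) * hc

private lemma one_add_pow_sq_zero {R : Type*} [CommRing R] {c : R} (hc : c * c = 0) (m : ℕ) :
    (1 + c) ^ m = 1 + (m : R) * c := by
  induction m with
  | zero => simp
  | succ n ih =>
    rw [pow_succ, ih]
    push_cast
    linear_combination (n : R) * hc

variable {p : ℕ} [hp : Fact p.Prime]

private lemma padicNorm_nat_le (m : ℕ) : padicNorm p (m : ℚ) ≤ 1 := by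
  have := padicNorm.of_int (p := p) (m : ℤ)
  exact_mod_cast this

private lemma padicNorm_nat_eq_one {m : ℕ} (h : ¬ p ∣ m) : padicNorm p (m : ℚ) = 1 := by
  have h1 : padicNorm p ((m : ℤ) : ℚ) ≤ 1 := padicNorm.of_int _
  have h2 : ¬ padicNorm p ((m : ℤ) : ℚ) < 1 := by
    rw [padicNorm.int_lt_one_iff]
    exact_mod_cast h
  have := le_antisymm h1 (not_lt.mp h2)
  exact_mod_cast this

/-- the binomial coefficients `C(p-1, j)` are `(-1)^j` mod `p`. -/
private lemma choose_prime_sub_one_zmod :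
    ∀ j, j < p → (((p - 1).choose j : ℕ) : ZMod p) = (-1) ^ j := by
  intro j
  induction j with
  | zero => simp
  | succ n ih =>
    intro hn
    have hn' : n < p := Nat.lt_of_succ_lt hn
    have hpc : ((p.choose (n + 1) : ℕ) : ZMod p) = 0 := by
      rw [ZMod.natCast_eq_zero_iff]
      exact Nat.Prime.dvd_choose_self hp.out (Nat.succ_ne_zero n) hn
    have hps : p - 1 + 1 = p := Nat.succ_pred_eq_of_pos hp.out.pos
    have hpas : (p - 1).choose n + (p - 1).choose (n + 1) = p.choose (n + 1) := by
      conv_rhs => rw [← hps]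
      exact (Nat.choose_succ_succ' (p - 1) n).symm
    have h2 := congrArg (Nat.cast : ℕ → ZMod p) hpas
    push_cast at h2
    rw [ih hn', hpc] at h2
    have : (((p - 1).choose (n + 1) : ℕ) : ZMod p) = -(-1) ^ n := by linear_combination h2
    rw [this, pow_succ]
    ring

private lemma choose_prime_sub_one_int {j : ℕ} (hj : j < p) :
    ∃ m : ℤ, ((p - 1).choose j : ℤ) = (-1) ^ j + p * m := by
  have h := choose_prime_sub_one_zmod (p := p) j hj
  have h0 : ((((p - 1).choose j : ℤ) - (-1) ^ j : ℤ) : ZMod p) = 0 := by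
    push_cast
    rw [h]
    ring
  rw [ZMod.intCast_zmod_eq_zero_iff_dvd] at h0
  obtain ⟨m, hm⟩ := h0
  exact ⟨m, by linarith [hm]⟩

/-- `p`-integrality of Bernoulli numbers `B'_j` for `j ≤ p - 2`. -/
private lemma bernoulli'_padicNorm_le : ∀ j, j ≤ p - 2 → padicNorm p (bernoulli' j) ≤ 1 := by
  intro j
  induction j using Nat.strong_induction_on with
  | _ j ih =>
    intro hj
    have hp2 : 2 ≤ p := hp.out.two_le
    have hrec := sum_bernoulli' (j + 1)
    rw [Finset.sum_range_succ, Nat.choose_succ_self_right] at hrec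
    have hj1 : ¬ p ∣ (j + 1) := by
      intro hdvd
      have := Nat.le_of_dvd (Nat.succ_pos j) hdvd
      omega
    have hnorm1 : padicNorm p ((j + 1 : ℕ) : ℚ) = 1 := padicNorm_nat_eq_one hj1
    have key : padicNorm p (((j + 1 : ℕ) : ℚ) * bernoulli' j) ≤ 1 := by
      have heq : ((j + 1 : ℕ) : ℚ) * bernoulli' j =
          ((j + 1 : ℕ) : ℚ) + -∑ k ∈ Finset.range j, ((j + 1).choose k : ℚ) * bernoulli' k := by
        push_cast at hrec ⊢
        linarith [hrec]
      rw [heq]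
      refine le_trans padicNorm.nonarchimedean (max_le ?_ ?_)
      · exact padicNorm_nat_le _
      · rw [padicNorm.neg]
        refine padicNorm.sum_le' (fun k hk => ?_) zero_le_one
        rw [padicNorm.mul]
        have h1 : padicNorm p (((j + 1).choose k : ℚ)) ≤ 1 := padicNorm_nat_le _
        have h2 : padicNorm p (bernoulli' k) ≤ 1 :=
          ih k (Finset.mem_range.mp hk) (le_trans (Nat.le_of_lt (Finset.mem_range.mp hk)) hj)
        calc padicNorm p ((j + 1).choose k : ℚ) * padicNorm p (bernoulli' k)
            ≤ 1 * 1 := mul_le_mul h1 h2 (padicNorm.nonneg _) zero_le_one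
          _ = 1 := by ring
    rwa [padicNorm.mul, hnorm1, one_mul] at key

private lemma bernoulli_padicNorm_le {j : ℕ} (hj : j ≤ p - 2) :
    padicNorm p (bernoulli j) ≤ 1 := by
  have h : bernoulli j = (-1) ^ j * bernoulli' j := rfl
  rcases Nat.even_or_odd j with he | ho
  · rw [h, he.neg_one_pow, one_mul]; exact bernoulli'_padicNorm_le j hj
  · rw [h, ho.neg_one_pow, neg_one_mul, padicNorm.neg]; exact bernoulli'_padicNorm_le j hj

/-- The integer congruence `∑_{k=1}^{p-1} k^{p-1} ≡ (p-1)! + p  (mod p²)`. -/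
private lemma sum_pow_int_cong (hodd : Odd p) :
    ((p : ℤ)) ^ 2 ∣ (∑ k ∈ Finset.Icc 1 (p - 1), (k : ℤ) ^ (p - 1)) - ((Nat.factorial (p - 1) : ℤ) + p) := by
  have hp2 : 2 ≤ p := hp.out.two_le
  have hps : p - 1 + 1 = p := Nat.succ_pred_eq_of_pos hp.out.pos
  -- Fermat quotients
  set q : ℕ → ℤ := fun k => ((k : ℤ) ^ (p - 1) - 1) / p with hq_def
  have hq : ∀ k ∈ Finset.Icc 1 (p - 1), (k : ℤ) ^ (p - 1) = 1 + p * q k := by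
    intro k hk
    rw [Finset.mem_Icc] at hk
    have hknz : (k : ZMod p) ≠ 0 := by
      rw [Ne, ZMod.natCast_eq_zero_iff]
      intro hdvd
      have := Nat.le_of_dvd (by omega) hdvd
      omega
    have hfermat : (k : ZMod p) ^ (p - 1) = 1 := ZMod.pow_card_sub_one_eq_one hknz
    have hdvd : (p : ℤ) ∣ (k : ℤ) ^ (p - 1) - 1 := by
      rw [← ZMod.intCast_zmod_eq_zero_iff_dvd]
      push_cast
      rw [hfermat]
      ring
    show (k : ℤ) ^ (p - 1) = 1 + (p : ℤ) * (((k : ℤ) ^ (p - 1) - 1) / (p : ℤ))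
    linarith [Int.mul_ediv_cancel' hdvd]
  -- Wilson quotient
  have hwd : (p : ℤ) ∣ (Nat.factorial (p - 1) : ℤ) + 1 := by
    rw [← ZMod.intCast_zmod_eq_zero_iff_dvd]
    push_cast
    rw [ZMod.wilsons_lemma]
    ring
  obtain ⟨w, hw⟩ := hwd
  -- work in ZMod (p^2)
  set R := ZMod (p ^ 2) with hR
  have hc : ((p : R)) * (p : R) = 0 := by
    have h0 : ((p ^ 2 : ℕ) : R) = 0 := ZMod.natCast_self _
    push_cast at h0
    linear_combination h0
  have hcastp1 : ((p - 1 : ℕ) : R) = (p : R) - 1 := by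
    rw [Nat.cast_sub hp.out.one_le, Nat.cast_one]
  have hA : ∑ k ∈ Finset.Icc 1 (p - 1), ((k : ℤ) : R) ^ (p - 1)
      = ((p - 1 : ℕ) : R) + (p : R) * ∑ k ∈ Finset.Icc 1 (p - 1), ((q k : ℤ) : R) := by
    have h1 : ∑ k ∈ Finset.Icc 1 (p - 1), ((k : ℤ) : R) ^ (p - 1)
        = ∑ k ∈ Finset.Icc 1 (p - 1), (1 + (p : R) * ((q k : ℤ) : R)) := by
      refine Finset.sum_congr rfl fun k hk => ?_
      have := congrArg (Int.cast : ℤ → R) (hq k hk)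
      rw [Int.cast_add, Int.cast_mul] at this
      push_cast at this ⊢
      linear_combination this
    rw [h1, Finset.sum_add_distrib, Finset.sum_const, ← Finset.mul_sum, nsmul_eq_mul, mul_one,
      Nat.card_Icc]
    congr 2
  have hprod : ∏ k ∈ Finset.Icc 1 (p - 1), ((k : ℤ) : R) ^ (p - 1)
      = ((Nat.factorial (p - 1) : ℤ) : R) ^ (p - 1) := by
    have hfac : ∏ k ∈ Finset.Icc 1 (p - 1), (k : ℕ) = Nat.factorial (p - 1) := by
      rw [← Finset.Ico_add_one_right_eq_Icc]
      exact Finset.prod_Ico_id_eq_factorial (p - 1)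
    rw [Finset.prod_pow]
    congr 1
    rw [← hfac]
    push_cast
    rfl
  have hprod2 : ∏ k ∈ Finset.Icc 1 (p - 1), ((k : ℤ) : R) ^ (p - 1)
      = 1 + (p : R) * ∑ k ∈ Finset.Icc 1 (p - 1), ((q k : ℤ) : R) := by
    rw [← prod_one_add_sq_zero hc (Finset.Icc 1 (p - 1)) (fun k => ((q k : ℤ) : R))]
    refine Finset.prod_congr rfl fun k hk => ?_
    have := congrArg (Int.cast : ℤ → R) (hq k hk)
    rw [Int.cast_add, Int.cast_mul] at this
    push_cast at this ⊢
    linear_combination this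
  have hNcast : ((Nat.factorial (p - 1) : ℤ) : R) = (p : R) * (w : R) - 1 := by
    have := congrArg (Int.cast : ℤ → R) hw
    rw [Int.cast_mul] at this
    push_cast at this ⊢
    linear_combination this
  have heven : Even (p - 1) := by
    rcases hodd with ⟨m, hm⟩
    exact ⟨m, by omega⟩
  have hpow : ((Nat.factorial (p - 1) : ℤ) : R) ^ (p - 1) = 1 + (p : R) * (w : R) := by
    rw [hNcast]
    have h1 : ((p : R) * w - 1) ^ (p - 1) = (1 + -((p : R) * w)) ^ (p - 1) := by
      rw [show (1 : R) + -((p : R) * w) = -((p : R) * w - 1) by ring]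
      exact (heven.neg_pow _).symm
    rw [h1, one_add_pow_sq_zero (by linear_combination (w * w : R) * hc) (p - 1)]
    rw [hcastp1]
    linear_combination (-(w : R)) * hc
  have hkey : ∑ k ∈ Finset.Icc 1 (p - 1), ((k : ℤ) : R) ^ (p - 1)
      = ((Nat.factorial (p - 1) : ℤ) : R) + (p : R) := by
    have hsum_eq : (p : R) * ∑ k ∈ Finset.Icc 1 (p - 1), ((q k : ℤ) : R) = (p : R) * (w : R) := by
      have heq2 := hprod2.symm.trans (hprod.trans hpow)
      linear_combination heq2
    rw [hA, hsum_eq, hNcast, hcastp1]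
    ring
  -- conclude divisibility
  push_cast at hkey
  have hfin : (((∑ k ∈ Finset.Icc 1 (p - 1), (k : ℤ) ^ (p - 1)) - ((Nat.factorial (p - 1) : ℤ) + p) : ℤ) : R)
      = 0 := by
    rw [Int.cast_sub, Int.cast_sum]
    push_cast
    rw [hkey]
    ring
  rw [ZMod.intCast_zmod_eq_zero_iff_dvd] at hfin
  exact_mod_cast hfin

end Aux

private lemma padicNorm_le_one_not_dvd_den {p : ℕ} [hp : Fact p.Prime] {q : ℚ}
    (h : padicNorm p q ≤ 1) : ¬ p ∣ q.den := by
  intro hden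
  have hnum : ¬ (p : ℤ) ∣ q.num := by
    intro hd
    have h1 : p ∣ q.num.natAbs := Int.natCast_dvd.mp hd
    have h3 : p ∣ 1 := q.reduced ▸ Nat.dvd_gcd h1 hden
    have := Nat.le_of_dvd one_pos h3
    have := hp.out.two_le
    omega
  have hnorm_num : padicNorm p (q.num : ℚ) = 1 := by
    have h1 : padicNorm p ((q.num : ℤ) : ℚ) ≤ 1 := padicNorm.of_int _
    have h2 : ¬ padicNorm p ((q.num : ℤ) : ℚ) < 1 := by
      rw [padicNorm.int_lt_one_iff]; exact hnum
    exact le_antisymm h1 (not_lt.mp h2)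
  have hnorm_den : padicNorm p (q.den : ℚ) ≤ (p : ℚ)⁻¹ := by
    have hdz : ((p ^ 1 : ℕ) : ℤ) ∣ (q.den : ℤ) := by
      rw [pow_one]
      exact_mod_cast hden
    have := (padicNorm.dvd_iff_norm_le (p := p) (n := 1)).mp hdz
    simpa using this
  have hden0 : ((q.den : ℚ)) ≠ 0 := Nat.cast_ne_zero.mpr q.den_nz
  have hq : (q.num : ℚ) = q * q.den := (div_eq_iff hden0).mp (Rat.num_div_den q)
  have hcontr : (1 : ℚ) ≤ (p : ℚ)⁻¹ := by
    calc (1 : ℚ) = padicNorm p (q.num : ℚ) := hnorm_num.symm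
      _ = padicNorm p q * padicNorm p (q.den : ℚ) := by rw [← padicNorm.mul, ← hq]
      _ ≤ 1 * (p : ℚ)⁻¹ := mul_le_mul h hnorm_den (padicNorm.nonneg _) zero_le_one
      _ = (p : ℚ)⁻¹ := one_mul _
  have hp1 : (1 : ℚ) < (p : ℚ) := by exact_mod_cast hp.out.one_lt
  have hinv : (p : ℚ) * (p : ℚ)⁻¹ = 1 := mul_inv_cancel₀ (by positivity)
  nlinarith

/-- `Σ_{i=1}^{p-2} B_i/i ≡ w_p (mod p)` with `w_p` the Wilson quotient. -/
theorem sum_divided_bernoulli (p : ℕ) (hp : p.Prime) (hodd : Odd p) :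
    ratCongr p 1 (∑ i ∈ Finset.Icc 1 (p - 2), bernoulli i / i)
      ((((((Nat.factorial (p - 1) : ℕ) : ℤ) + 1) / (p : ℤ) : ℤ) : ℚ)) := by
  haveI hpI : Fact p.Prime := ⟨hp⟩
  have hp3 : 3 ≤ p := by
    rcases Nat.lt_or_ge p 3 with h | h
    · interval_cases p
      · exact absurd hp (by norm_num)
      · exact absurd hp (by norm_num)
      · exact absurd hodd (by decide)
    · exact h
  have hps : p - 1 + 1 = p := by omega
  have hps2 : p - 2 + 1 = p - 1 := by omega
  have hp0 : (p : ℚ) ≠ 0 := Nat.cast_ne_zero.mpr (by omega)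
  have hIcc2 : Finset.Ico 1 (p - 1) = Finset.Icc 1 (p - 2) := by
    ext x
    simp only [Finset.mem_Ico, Finset.mem_Icc]
    omega
  have hIcc1 : Finset.Ico 1 p = Finset.Icc 1 (p - 1) := by
    ext x
    simp only [Finset.mem_Ico, Finset.mem_Icc]
    omega
  -- ε helper
  have hεbound : ∀ z : ℤ, (p : ℤ) ^ 2 ∣ z → padicNorm p (z : ℚ) ≤ (p : ℚ) ^ (-2 : ℤ) := by
    intro z hz
    have h1 := (padicNorm.dvd_iff_norm_le (p := p) (n := 2) (z := z)).mp (by push_cast; exact hz)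
    convert h1 using 2
    norm_num
  have hε0 : (0 : ℚ) ≤ (p : ℚ) ^ (-2 : ℤ) := by positivity
  -- Wilson quotient
  have hwd : (p : ℤ) ∣ (Nat.factorial (p - 1) : ℤ) + 1 := by
    rw [← ZMod.intCast_zmod_eq_zero_iff_dvd]
    push_cast
    rw [ZMod.wilsons_lemma]
    ring
  have hw : (p : ℤ) * (((Nat.factorial (p - 1) : ℤ) + 1) / (p : ℤ)) = (Nat.factorial (p - 1) : ℤ) + 1 :=
    Int.mul_ediv_cancel' hwd
  -- (1) the Bernoulli recurrence at n = p
  have hrec := sum_bernoulli' (p - 1 + 1)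
  rw [Finset.sum_range_succ, Nat.choose_succ_self_right, hps] at hrec
  rw [Finset.range_eq_Ico, Finset.sum_eq_sum_Ico_succ_bot (by omega : 0 < p - 1)] at hrec
  rw [hIcc2] at hrec
  simp only [Nat.choose_zero_right, Nat.cast_one, bernoulli'_zero, one_mul] at hrec
  -- hrec : 1 + ∑ i ∈ Icc 1 (p-2), (p.choose i : ℚ) * bernoulli' i + p * bernoulli' (p-1) = p
  -- (2) per-term bound
  have hterm : ∀ i ∈ Finset.Icc 1 (p - 2),
      padicNorm p ((p.choose i : ℚ) * bernoulli' i + (p : ℚ) * (bernoulli i / i))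
        ≤ (p : ℚ) ^ (-2 : ℤ) := by
    intro i hi
    rw [Finset.mem_Icc] at hi
    have hi1 : i - 1 + 1 = i := by omega
    have hip : ¬ p ∣ i := fun hd => by
      have := Nat.le_of_dvd (by omega) hd
      omega
    have hiQ : (i : ℚ) ≠ 0 := Nat.cast_ne_zero.mpr (by omega)
    obtain ⟨m, hm⟩ := choose_prime_sub_one_int (p := p) (j := i - 1) (by omega)
    have hchoose : (p : ℤ) * ((p - 1).choose (i - 1) : ℤ) = (i : ℤ) * (p.choose i : ℤ) := by
      have h := Nat.add_one_mul_choose_eq (p - 1) (i - 1)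
      rw [hps, hi1] at h
      have h2 := congrArg (Nat.cast : ℕ → ℤ) h
      push_cast at h2
      linear_combination h2
    have hcQ : (i : ℚ) * (p.choose i : ℚ) = (p : ℚ) * ((p - 1).choose (i - 1) : ℚ) := by
      exact_mod_cast congrArg (Int.cast : ℤ → ℚ) hchoose.symm
    have hmQ : (((p - 1).choose (i - 1) : ℕ) : ℚ) = (-1) ^ (i - 1) + (p : ℚ) * (m : ℚ) := by
      exact_mod_cast congrArg (Int.cast : ℤ → ℚ) hm
    have hkey : (p.choose i : ℚ) * bernoulli' i + (p : ℚ) * (bernoulli i / i)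
        = (((p : ℤ) ^ 2 * m : ℤ) : ℚ) * (bernoulli' i / (i : ℚ)) := by
      have hb : bernoulli i = (-1) ^ i * bernoulli' i := rfl
      have hsign : ((-1 : ℚ)) ^ i = -(-1 : ℚ) ^ (i - 1) := by
        conv_lhs => rw [← hi1]
        rw [pow_succ]
        ring
      have hC : (p.choose i : ℚ) = ((p : ℚ) * ((-1) ^ (i - 1) + (p : ℚ) * (m : ℚ))) / i := by
        rw [eq_div_iff hiQ]
        linear_combination hcQ + (p : ℚ) * hmQ
      rw [hb, hsign, hC]
      push_cast
      field_simp
      ring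
    rw [hkey, padicNorm.mul, padicNorm.div, padicNorm_nat_eq_one hip, div_one]
    have h1 : padicNorm p (((p : ℤ) ^ 2 * m : ℤ) : ℚ) ≤ (p : ℚ) ^ (-2 : ℤ) :=
      hεbound _ ⟨m, rfl⟩
    have h2 : padicNorm p (bernoulli' i) ≤ 1 := bernoulli'_padicNorm_le i (by omega)
    calc padicNorm p (((p : ℤ) ^ 2 * m : ℤ) : ℚ) * padicNorm p (bernoulli' i)
        ≤ (p : ℚ) ^ (-2 : ℤ) * 1 := mul_le_mul h1 h2 (padicNorm.nonneg _) hε0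
      _ = (p : ℚ) ^ (-2 : ℤ) := mul_one _
  -- (3) sum bound
  have hQS : padicNorm p ((∑ i ∈ Finset.Icc 1 (p - 2), (p.choose i : ℚ) * bernoulli' i)
      + (p : ℚ) * ∑ i ∈ Finset.Icc 1 (p - 2), bernoulli i / i) ≤ (p : ℚ) ^ (-2 : ℤ) := by
    rw [Finset.mul_sum, ← Finset.sum_add_distrib]
    exact padicNorm.sum_le' hterm hε0
  -- (4) Faulhaber
  have hfaul := sum_range_pow p (p - 1)
  rw [Finset.sum_range_succ] at hfaul
  rw [hps] at hfaul
  have hden : ((p - 1 : ℕ) : ℚ) + 1 = (p : ℚ) := by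
    have := congrArg (Nat.cast : ℕ → ℚ) hps
    push_cast at this
    linarith [this]
  rw [hden] at hfaul
  have hch : (p.choose (p - 1) : ℕ) = p :=
    (Nat.choose_symm (n := p) (k := 1) (by omega)).trans (Nat.choose_one_right p)
  have hexp1 : p - (p - 1) = 1 := by omega
  rw [hch, hexp1, pow_one] at hfaul
  rw [Finset.range_eq_Ico, Finset.sum_eq_sum_Ico_succ_bot (by omega : 0 < p), hIcc1] at hfaul
  rw [Nat.cast_zero, zero_pow (by omega : p - 1 ≠ 0)] at hfaul
  have hBB : bernoulli (p - 1) = bernoulli' (p - 1) :=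
    bernoulli_eq_bernoulli'_of_ne_one (by omega)
  have htop : bernoulli (p - 1) * (p : ℚ) * (p : ℚ) / (p : ℚ) = (p : ℚ) * bernoulli' (p - 1) := by
    rw [hBB]
    field_simp
  rw [htop] at hfaul
  -- hfaul : 0 + T = ∑ i ∈ range (p-1), bernoulli i * (p.choose i) * p^(p-i)/p + p * bernoulli' (p-1)
  have hTX : padicNorm p ((∑ k ∈ Finset.Icc 1 (p - 1), (k : ℚ) ^ (p - 1))
      - (p : ℚ) * bernoulli' (p - 1)) ≤ (p : ℚ) ^ (-2 : ℤ) := by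
    have heq : (∑ k ∈ Finset.Icc 1 (p - 1), (k : ℚ) ^ (p - 1)) - (p : ℚ) * bernoulli' (p - 1)
        = ∑ i ∈ Finset.range (p - 1),
            bernoulli i * (p.choose i : ℚ) * (p : ℚ) ^ (p - i) / (p : ℚ) := by
      linarith [hfaul]
    rw [heq]
    refine padicNorm.sum_le' (fun i hi => ?_) hε0
    rw [Finset.mem_range] at hi
    have hexp : p - i = (p - 1 - i) + 1 := by omega
    have hre : bernoulli i * (p.choose i : ℚ) * (p : ℚ) ^ (p - i) / (p : ℚ)
        = bernoulli i * (((p.choose i : ℤ) * (p : ℤ) ^ (p - 1 - i) : ℤ) : ℚ) := by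
      rw [hexp, pow_succ]
      push_cast
      field_simp
    rw [hre, padicNorm.mul]
    have hd2 : (p : ℤ) ^ 2 ∣ (p.choose i : ℤ) * (p : ℤ) ^ (p - 1 - i) := by
      rcases Nat.eq_zero_or_pos i with rfl | hi0
      · simp only [Nat.choose_zero_right, Nat.cast_one, one_mul]
        exact pow_dvd_pow _ (by omega)
      · have hc : (p : ℤ) ∣ (p.choose i : ℤ) := by
          exact_mod_cast Int.natCast_dvd_natCast.mpr
            (Nat.Prime.dvd_choose_self hp (by omega) (by omega))
        have hpp : (p : ℤ) ∣ (p : ℤ) ^ (p - 1 - i) := dvd_pow_self _ (by omega)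
        rw [sq]
        exact mul_dvd_mul hc hpp
    have h1 : padicNorm p (bernoulli i) ≤ 1 := bernoulli_padicNorm_le (by omega)
    have h2 : padicNorm p (((p.choose i : ℤ) * (p : ℤ) ^ (p - 1 - i) : ℤ) : ℚ)
        ≤ (p : ℚ) ^ (-2 : ℤ) := hεbound _ hd2
    calc padicNorm p (bernoulli i) * padicNorm p (((p.choose i : ℤ) * (p : ℤ) ^ (p - 1 - i) : ℤ) : ℚ)
        ≤ 1 * ((p : ℚ) ^ (-2 : ℤ)) := mul_le_mul h1 h2 (padicNorm.nonneg _) zero_le_one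
      _ = (p : ℚ) ^ (-2 : ℤ) := one_mul _
  -- (5) Wilson integer congruence, in ℚ
  have hTF : padicNorm p ((∑ k ∈ Finset.Icc 1 (p - 1), (k : ℚ) ^ (p - 1))
      - (((Nat.factorial (p - 1) : ℤ) : ℚ) + (p : ℚ))) ≤ (p : ℚ) ^ (-2 : ℤ) := by
    have hd := sum_pow_int_cong (p := p) hodd
    have hcast : (∑ k ∈ Finset.Icc 1 (p - 1), (k : ℚ) ^ (p - 1))
        - (((Nat.factorial (p - 1) : ℤ) : ℚ) + (p : ℚ))
        = (((∑ k ∈ Finset.Icc 1 (p - 1), (k : ℤ) ^ (p - 1)) - ((Nat.factorial (p - 1) : ℤ) + p) : ℤ) : ℚ) := by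
      push_cast
      ring
    rw [hcast]
    exact hεbound _ hd
  -- (6) assemble the chain
  have h1 : padicNorm p ((p : ℚ) * bernoulli' (p - 1)
      - ((p : ℚ) - 1 + (p : ℚ) * ∑ i ∈ Finset.Icc 1 (p - 2), bernoulli i / i))
      ≤ (p : ℚ) ^ (-2 : ℤ) := by
    have heq : (p : ℚ) * bernoulli' (p - 1)
        - ((p : ℚ) - 1 + (p : ℚ) * ∑ i ∈ Finset.Icc 1 (p - 2), bernoulli i / i)
        = -((∑ i ∈ Finset.Icc 1 (p - 2), (p.choose i : ℚ) * bernoulli' i)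
            + (p : ℚ) * ∑ i ∈ Finset.Icc 1 (p - 2), bernoulli i / i) := by
      linarith [hrec]
    rw [heq, padicNorm.neg]
    exact hQS
  have hchain : padicNorm p (((p : ℚ) - 1 + (p : ℚ) * ∑ i ∈ Finset.Icc 1 (p - 2), bernoulli i / i)
      - (((Nat.factorial (p - 1) : ℤ) : ℚ) + (p : ℚ))) ≤ (p : ℚ) ^ (-2 : ℤ) := by
    have hsplit : ((p : ℚ) - 1 + (p : ℚ) * ∑ i ∈ Finset.Icc 1 (p - 2), bernoulli i / i)
        - (((Nat.factorial (p - 1) : ℤ) : ℚ) + (p : ℚ))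
        = (-((p : ℚ) * bernoulli' (p - 1)
              - ((p : ℚ) - 1 + (p : ℚ) * ∑ i ∈ Finset.Icc 1 (p - 2), bernoulli i / i))
          + -((∑ k ∈ Finset.Icc 1 (p - 1), (k : ℚ) ^ (p - 1)) - (p : ℚ) * bernoulli' (p - 1)))
          + ((∑ k ∈ Finset.Icc 1 (p - 1), (k : ℚ) ^ (p - 1))
              - (((Nat.factorial (p - 1) : ℤ) : ℚ) + (p : ℚ))) := by
      ring
    rw [hsplit]
    refine le_trans padicNorm.nonarchimedean (max_le (le_trans padicNorm.nonarchimedean (max_le ?_ ?_)) ?_)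
    · rw [padicNorm.neg]; exact h1
    · rw [padicNorm.neg]; exact hTX
    · exact hTF
  -- (7) extract the final bound
  have hwq : (p : ℚ) * ((((Nat.factorial (p - 1) : ℤ) + 1) / (p : ℤ) : ℤ) : ℚ)
      = ((Nat.factorial (p - 1) : ℤ) : ℚ) + 1 := by
    exact_mod_cast congrArg (Int.cast : ℤ → ℚ) hw
  have hfinal : padicNorm p ((p : ℚ) * ((∑ i ∈ Finset.Icc 1 (p - 2), bernoulli i / i)
      - ((((Nat.factorial (p - 1) : ℤ) + 1) / (p : ℤ) : ℤ) : ℚ))) ≤ (p : ℚ) ^ (-2 : ℤ) := by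
    have heq : (p : ℚ) * ((∑ i ∈ Finset.Icc 1 (p - 2), bernoulli i / i)
        - ((((Nat.factorial (p - 1) : ℤ) + 1) / (p : ℤ) : ℤ) : ℚ))
        = ((p : ℚ) - 1 + (p : ℚ) * ∑ i ∈ Finset.Icc 1 (p - 2), bernoulli i / i)
          - (((Nat.factorial (p - 1) : ℤ) : ℚ) + (p : ℚ)) := by
      linear_combination -hwq
    rw [heq]
    exact hchain
  have hSw : padicNorm p ((∑ i ∈ Finset.Icc 1 (p - 2), bernoulli i / i)
      - ((((Nat.factorial (p - 1) : ℤ) + 1) / (p : ℤ) : ℤ) : ℚ)) ≤ (p : ℚ)⁻¹ := by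
    rw [padicNorm.mul, padicNorm.padicNorm_p_of_prime] at hfinal
    have hε' : (p : ℚ) ^ (-2 : ℤ) = (p : ℚ)⁻¹ * (p : ℚ)⁻¹ := by
      rw [show (-2 : ℤ) = -1 + -1 by norm_num, zpow_add₀ hp0, zpow_neg, zpow_one]
    rw [hε'] at hfinal
    have hppos : (0 : ℚ) < (p : ℚ)⁻¹ := by
      have : (0 : ℚ) < (p : ℚ) := by positivity
      positivity
    exact (mul_le_mul_iff_of_pos_left hppos).mp hfinal
  refine ⟨((∑ i ∈ Finset.Icc 1 (p - 2), bernoulli i / i)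
      - ((((Nat.factorial (p - 1) : ℤ) + 1) / (p : ℤ) : ℤ) : ℚ)) / (p : ℚ), ?_, ?_⟩
  · rw [pow_one]
    field_simp
  · apply padicNorm_le_one_not_dvd_den (p := p)
    rw [padicNorm.div, padicNorm.padicNorm_p_of_prime, div_eq_mul_inv, inv_inv]
    calc padicNorm p _ * (p : ℚ) ≤ (p : ℚ)⁻¹ * (p : ℚ) :=
          mul_le_mul_of_nonneg_right hSw (by positivity)
      _ = 1 := inv_mul_cancel₀ hp0
end

section
/- Let p be an odd prime and let q_2 = (2^{p−1} − 1)/p denote the Fermat quotient of p in base 2. Then the harmonic number of order (p−1)/2 satisfies H_{(p−1)/2} = Σ_{k=1}^{(p−1)/2} 1/k ≡ −2·q_2 (mod p). -/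
-- L1: (p-1 choose j) ≡ (-1)^j mod p
lemma choose_pred_cast (p : ℕ) (hp : p.Prime) : ∀ j, j ≤ p - 1 →
    ((Nat.choose (p-1) j : ZMod p)) = (-1)^j := by
  haveI : Fact p.Prime := ⟨hp⟩
  intro j
  induction j with
  | zero => intro _; simp
  | succ j ih =>
    intro hj
    have hj' : j ≤ p - 1 := Nat.le_of_succ_le hj
    have hpascal : Nat.choose p (j+1) = Nat.choose (p-1) j + Nat.choose (p-1) (j+1) := by
      conv_lhs => rw [← Nat.succ_pred_eq_of_pos hp.pos]
      exact Nat.choose_succ_succ _ j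
    have hdvd : p ∣ Nat.choose p (j+1) :=
      Nat.Prime.dvd_choose_self hp (Nat.succ_ne_zero j)
        (by omega)
    have h0 : ((Nat.choose p (j+1) : ZMod p)) = 0 :=
      (ZMod.natCast_eq_zero_iff _ _).2 hdvd
    rw [hpascal, Nat.cast_add, ih hj'] at h0
    have := eq_neg_of_add_eq_zero_right h0.symm.symm
    rw [pow_succ]
    linear_combination h0

-- k * c_k = choose (p-1) (k-1) where c_k = choose p k / p
lemma ck_eq (p : ℕ) (hp : p.Prime) (k : ℕ) (hk : k ∈ Finset.Icc 1 (p-1)) :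
    k * (Nat.choose p k / p) = Nat.choose (p-1) (k-1) := by
  simp only [Finset.mem_Icc] at hk
  obtain ⟨hk1, hk2⟩ := hk
  have hid : p * Nat.choose (p-1) (k-1) = Nat.choose p k * k := by
    have := Nat.add_one_mul_choose_eq (p-1) (k-1)
    have e1 : p - 1 + 1 = p := by omega
    have e2 : k - 1 + 1 = k := by omega
    rwa [e1, e2] at this
  have hdvd : p ∣ Nat.choose p k := hp.dvd_choose_self (by omega) (by omega)
  obtain ⟨c, hc⟩ := hdvd
  rw [hc, Nat.mul_div_cancel_left _ hp.pos]
  have : p * Nat.choose (p-1) (k-1) = p * (c * k) := by rw [hid, hc]; ring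
  have h2 := Nat.eq_of_mul_eq_mul_left hp.pos this
  rw [h2]; ring

-- sum of c_k = 2 * q_nat
lemma sum_ck (p : ℕ) (hp : p.Prime) (hodd : Odd p) :
    ∑ k ∈ Finset.Icc 1 (p-1), (Nat.choose p k / p) = 2 * ((2^(p-1) - 1) / p) := by
  haveI : Fact p.Prime := ⟨hp⟩
  have hp2 : p ≠ 2 := by rintro rfl; exact (Nat.not_odd_iff_even.2 (by norm_num)) hodd
  have hp3 : 3 ≤ p := by
    have := hp.two_le; omega
  -- p ∣ 2^(p-1) - 1
  have h2ne : (2 : ZMod p) ≠ 0 := by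
    intro h
    have h2 : (p : ℕ) ∣ 2 := (ZMod.natCast_eq_zero_iff 2 p).1 (by exact_mod_cast h)
    have := (Nat.prime_dvd_prime_iff_eq hp Nat.prime_two).1 h2
    exact hp2 this
  have hfermat : (2 : ZMod p)^(p-1) = 1 := ZMod.pow_card_sub_one_eq_one h2ne
  have hdvd1 : p ∣ 2^(p-1) - 1 := by
    have : ((2^(p-1) - 1 : ℕ) : ZMod p) = 0 := by
      have h1 : (1:ℕ) ≤ 2^(p-1) := Nat.one_le_two_pow
      push_cast [h1]
      rw [hfermat]; ring
    exact (ZMod.natCast_eq_zero_iff _ _).1 this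
  -- sum of choose p k over 1..p-1 = 2^p - 2
  have hsum : ∑ k ∈ Finset.Icc 1 (p-1), Nat.choose p k = 2^p - 2 := by
    have h := Nat.sum_range_choose p
    have : Finset.range (p+1) = insert 0 (insert p (Finset.Icc 1 (p-1))) := by
      ext x
      simp [Finset.mem_range, Finset.mem_Icc]
      omega
    rw [this] at h
    rw [Finset.sum_insert (by simp [Finset.mem_Icc]; omega),
      Finset.sum_insert (by simp [Finset.mem_Icc]; omega)] at h
    simp at h
    omega
  -- p * both sides equal
  apply Nat.eq_of_mul_eq_mul_left hp.pos
  rw [Finset.mul_sum]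
  have hterm : ∀ k ∈ Finset.Icc 1 (p-1), p * (Nat.choose p k / p) = Nat.choose p k := by
    intro k hk
    simp only [Finset.mem_Icc] at hk
    exact Nat.mul_div_cancel' (hp.dvd_choose_self (by omega) (by omega)) 
  rw [Finset.sum_congr rfl hterm, hsum]
  rw [Nat.mul_left_comm, Nat.mul_div_cancel' hdvd1]
  have h1 : (1:ℕ) ≤ 2^(p-1) := Nat.one_le_two_pow
  have h2p : 2^p = 2 * 2^(p-1) := by
    conv_lhs => rw [show p = (p-1)+1 by omega]
    rw [pow_succ]; ring
  omega

-- sum of inverses of 1..p-1 in ZMod p is 0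
lemma sum_inv_zero (p : ℕ) (hp : p.Prime) (hodd : Odd p) :
    ∑ k ∈ Finset.Icc 1 (p-1), ((k : ZMod p))⁻¹ = 0 := by
  haveI : Fact p.Prime := ⟨hp⟩
  apply Finset.sum_involution (fun k _ => p - k)
  · intro k hk
    simp only [Finset.mem_Icc] at hk
    have hcast : ((p - k : ℕ) : ZMod p) = -(k : ZMod p) := by
      push_cast [Nat.cast_sub (by omega : k ≤ p)]
      simp
    rw [hcast, inv_neg]
    ring
  · intro k hk hne
    simp only [Finset.mem_Icc] at hk
    intro h
    obtain ⟨j, hj⟩ := hodd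
    omega
  · intro k hk
    simp only [Finset.mem_Icc] at hk ⊢
    omega
  · intro k hk
    simp only [Finset.mem_Icc] at hk
    omega

-- reindexing even terms
lemma sum_even_part (p : ℕ) (hp : p.Prime) (hodd : Odd p) :
    ∑ k ∈ Finset.Icc 1 (p-1), (1 - (-1:ZMod p)^(k-1)) * ((k : ZMod p))⁻¹
      = ∑ j ∈ Finset.Icc 1 ((p-1)/2), ((j : ZMod p))⁻¹ := by
  haveI : Fact p.Prime := ⟨hp⟩
  obtain ⟨m', hm'⟩ := hodd
  set m := (p-1)/2 with hm
  have hpm : p = 2*m + 1 := by omega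
  have h2ne : (2 : ZMod p) ≠ 0 := by
    intro h
    have h2 : (p : ℕ) ∣ 2 := (ZMod.natCast_eq_zero_iff 2 p).1 (by exact_mod_cast h)
    have := (Nat.prime_dvd_prime_iff_eq hp Nat.prime_two).1 h2
    omega
  have himg : Finset.image (fun j => 2*j) (Finset.Icc 1 m) ⊆ Finset.Icc 1 (p-1) := by
    intro x hx
    simp only [Finset.mem_image, Finset.mem_Icc] at hx ⊢
    obtain ⟨j, hj, rfl⟩ := hx
    omega
  rw [← Finset.sum_subset himg, Finset.sum_image (by intro a _ b _ h; simp only at h; omega)]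
  · apply Finset.sum_congr rfl
    intro j hj
    simp only [Finset.mem_Icc] at hj
    have hodd' : Odd (2*j - 1) := ⟨j-1, by omega⟩
    rw [Odd.neg_one_pow hodd']
    have hjne : (j : ZMod p) ≠ 0 := by
      intro h
      have := (ZMod.natCast_eq_zero_iff j p).1 h
      have := Nat.le_of_dvd (by omega) this
      omega
    push_cast
    rw [mul_inv]
    have : (1:ZMod p) - -1 = 2 := by ring
    rw [this]
    field_simp
  · intro k hk hknotin
    simp only [Finset.mem_Icc] at hk
    -- k must be odd
    rcases Nat.even_or_odd k with he | ho
    · exfalso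
      obtain ⟨j, hj⟩ := he
      apply hknotin
      simp only [Finset.mem_image, Finset.mem_Icc]
      exact ⟨j, by omega, by omega⟩
    · obtain ⟨j, hj⟩ := ho
      have : Even (k - 1) := ⟨j, by omega⟩
      rw [Even.neg_one_pow this]
      ring

-- Main identity in ZMod p
lemma key_zmod (p : ℕ) (hp : p.Prime) (hodd : Odd p) :
    ∑ j ∈ Finset.Icc 1 ((p-1)/2), ((j : ZMod p))⁻¹
      = -2 * (((2^(p-1) - 1) / p : ℕ) : ZMod p) := by
  haveI : Fact p.Prime := ⟨hp⟩
  -- alternating sum equals sum of Fermat quotient terms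
  have halt : ∑ k ∈ Finset.Icc 1 (p-1), (-1:ZMod p)^(k-1) * ((k : ZMod p))⁻¹
      = ∑ k ∈ Finset.Icc 1 (p-1), ((Nat.choose p k / p : ℕ) : ZMod p) := by
    apply Finset.sum_congr rfl
    intro k hk
    have hkIcc := hk
    simp only [Finset.mem_Icc] at hk
    have hkne : (k : ZMod p) ≠ 0 := by
      intro h
      have := Nat.le_of_dvd (by omega) ((ZMod.natCast_eq_zero_iff k p).1 h)
      omega
    have h1 := ck_eq p hp k hkIcc
    have h2 : ((k * (Nat.choose p k / p) : ℕ) : ZMod p) = (-1)^(k-1) := by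
      rw [h1]
      exact choose_pred_cast p hp (k-1) (by omega)
    push_cast at h2
    rw [← h2, mul_comm ((k:ZMod p)) _, mul_assoc, mul_inv_cancel₀ hkne, mul_one]
  have hsumc : ∑ k ∈ Finset.Icc 1 (p-1), ((Nat.choose p k / p : ℕ) : ZMod p)
      = 2 * (((2^(p-1) - 1) / p : ℕ) : ZMod p) := by
    rw [← Nat.cast_sum]
    rw [sum_ck p hp hodd]
    push_cast
    ring
  have hsplit : ∑ k ∈ Finset.Icc 1 (p-1), (-1:ZMod p)^(k-1) * ((k : ZMod p))⁻¹
      = ∑ k ∈ Finset.Icc 1 (p-1), ((k : ZMod p))⁻¹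
        - ∑ k ∈ Finset.Icc 1 (p-1), (1 - (-1:ZMod p)^(k-1)) * ((k : ZMod p))⁻¹ := by
    rw [← Finset.sum_sub_distrib]
    apply Finset.sum_congr rfl
    intro k _
    ring
  rw [hsplit, sum_inv_zero p hp hodd, sum_even_part p hp hodd] at halt
  linear_combination -halt - hsumc

lemma fermat_dvd (p : ℕ) (hp : p.Prime) (hodd : Odd p) : p ∣ 2^(p-1) - 1 := by
  haveI : Fact p.Prime := ⟨hp⟩
  have hp2 : p ≠ 2 := by rintro rfl; exact (by norm_num : ¬ Odd 2) hodd
  have h2ne : (2 : ZMod p) ≠ 0 := by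
    intro h
    have h2 : (p : ℕ) ∣ 2 := (ZMod.natCast_eq_zero_iff 2 p).1 (by exact_mod_cast h)
    exact hp2 ((Nat.prime_dvd_prime_iff_eq hp Nat.prime_two).1 h2)
  have hfermat : (2 : ZMod p)^(p-1) = 1 := ZMod.pow_card_sub_one_eq_one h2ne
  have : ((2^(p-1) - 1 : ℕ) : ZMod p) = 0 := by
    have h1 : (1:ℕ) ≤ 2^(p-1) := Nat.one_le_two_pow
    push_cast [h1]
    rw [hfermat]; ring
  exact (ZMod.natCast_eq_zero_iff _ _).1 this

/-- `H_{(p-1)/2} ≡ -2·q_2 (mod p)` with `q_2 = (2^(p-1) - 1)/p`. -/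
theorem harmonic_half_fermat_quotient (p : ℕ) (hp : p.Prime) (hodd : Odd p) :
    ratCongr p 1 (∑ k ∈ Finset.Icc 1 ((p - 1) / 2), (1 : ℚ) / (k : ℚ))
      (-2 * ((((2 : ℤ) ^ (p - 1) - 1) / (p : ℤ) : ℤ) : ℚ)) := by
  haveI : Fact p.Prime := ⟨hp⟩
  set m := (p - 1) / 2 with hm
  have hmp : m < p := by have := hp.two_le; omega
  set D := Nat.factorial m with hD
  set A := ∑ k ∈ Finset.Icc 1 m, D / k with hA
  have hDpos : 0 < D := Nat.factorial_pos m
  have hDQ : (D : ℚ) ≠ 0 := by positivity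
  set qI : ℤ := ((2 : ℤ) ^ (p - 1) - 1) / (p : ℤ) with hqI
  have hqnat : qI = (((2^(p-1) - 1) / p : ℕ) : ℤ) := by
    obtain ⟨c, hc⟩ := fermat_dvd p hp hodd
    have h1 : (1:ℕ) ≤ 2^(p-1) := Nat.one_le_two_pow
    have hZ : ((2:ℤ)^(p-1) - 1) = (p : ℤ) * c := by
      have h2 : ((2^(p-1) - 1 : ℕ) : ℤ) = ((p * c : ℕ) : ℤ) := congrArg _ hc
      push_cast [h1] at h2
      linarith
    rw [hqI, hZ, Int.mul_ediv_cancel_left _ (by exact_mod_cast hp.pos.ne')]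
    rw [hc, Nat.mul_div_cancel_left _ hp.pos]
  -- the harmonic sum as A / D
  have hdvdk : ∀ k ∈ Finset.Icc 1 m, k ∣ D := by
    intro k hk
    simp only [Finset.mem_Icc] at hk
    exact Nat.dvd_factorial (by omega) hk.2
  have hHQ : (∑ k ∈ Finset.Icc 1 m, (1 : ℚ) / (k : ℚ)) = (A : ℚ) / D := by
    rw [hA, Nat.cast_sum, Finset.sum_div]
    apply Finset.sum_congr rfl
    intro k hk
    have hk' := hk
    simp only [Finset.mem_Icc] at hk'
    have hkQ : (k : ℚ) ≠ 0 := Nat.cast_ne_zero.mpr (by omega)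
    rw [Nat.cast_div (hdvdk k hk) hkQ]
    field_simp
  -- N and divisibility
  set N : ℤ := (A : ℤ) + 2 * qI * (D : ℤ) with hN
  have hNdvd : (p : ℤ) ∣ N := by
    have hcast : ((N : ℤ) : ZMod p) = 0 := by
      have hAz : ((A : ℕ) : ZMod p) = (D : ZMod p) * ∑ k ∈ Finset.Icc 1 m, ((k : ZMod p))⁻¹ := by
        rw [hA, Nat.cast_sum, Finset.mul_sum]
        apply Finset.sum_congr rfl
        intro k hk
        have hk' := hk
        simp only [Finset.mem_Icc] at hk'
        have hkz : ((k : ℕ) : ZMod p) ≠ 0 := by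
          intro h
          have := Nat.le_of_dvd (by omega) ((ZMod.natCast_eq_zero_iff k p).1 h)
          omega
        rw [Nat.cast_div (hdvdk k hk) hkz]
        field_simp
      have hN' : N = (A : ℤ) + 2 * (((2^(p-1) - 1) / p : ℕ) : ℤ) * (D : ℤ) := by
        rw [hN, hqnat]
      rw [hN', Int.cast_add, Int.cast_mul, Int.cast_mul, Int.cast_two,
        Int.cast_natCast, Int.cast_natCast, Int.cast_natCast]
      rw [hAz, key_zmod p hp hodd]
      ring
    exact (ZMod.intCast_zmod_eq_zero_iff_dvd N p).1 hcast
  refine ⟨((N / p : ℤ) : ℚ) / (D : ℚ), ?_, ?_⟩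
  · have hx : (∑ k ∈ Finset.Icc 1 m, (1 : ℚ) / (k : ℚ))
        - (-2 * ((qI : ℤ) : ℚ)) = (N : ℚ) / D := by
      rw [hHQ, hN]
      push_cast
      field_simp
      ring
    rw [hx, pow_one]
    rw [Rat.intCast_div N p hNdvd]
    rw [Int.cast_natCast]
    have hpQ : (p : ℚ) ≠ 0 := by
      have := hp.pos; positivity
    field_simp
  · intro hpden
    have hden : ((((N / p : ℤ) : ℚ) / (D : ℚ)).den : ℤ) ∣ (D : ℤ) := by
      have := Rat.den_dvd (N / p) (D : ℤ)
      rwa [Rat.divInt_eq_div] at this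
    have hden' : (((N / p : ℤ) : ℚ) / (D : ℚ)).den ∣ D := by exact_mod_cast hden
    have : p ∣ D := dvd_trans hpden hden'
    rw [hD] at this
    have := (Nat.Prime.dvd_factorial hp).1 this
    omega
end
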